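/- arXiv:math/0101056 — 4 statements merged into one kernel-verified Lean document; each statement's English description precedes it below -/
import Mathlib

section
/- Let n ≥ 1, let U, V, W be open subsets of ℝⁿ, let g : U → V and f : V → W be C² maps, and let x ∈ U be such that Dg(x) and Df(g(x)) are invertible. For a C² map h with invertible derivative define L(h)(y)(u,v) = Dh(y)⁻¹( D²h(y)(u,v) ), τ_h(y)(u) = tr( w ↦ L(h)(y)(u,w) ), and the projective symbol 𝔗(h)(y)(u,v) = L(h)(y)(u,v) − (1/(n+1))·( τ_h(y)(u)·v + τ_h(y)(v)·u ). Then for all u, v ∈ ℝⁿ: 𝔗(f∘g)(x)(u,v) = Dg(x)⁻¹( 𝔗(f)(g(x))( Dg(x)u, Dg(x)v ) ) + 𝔗(g)(x)(u,v); that is, the trace-adjusted (projective) Hessian cocycle satisfies the same 1-cocycle identity. -/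
open ContinuousLinearMap

/-- `L(h)(y)(u,·) = Dh(y)⁻¹ ∘ D²h(y)(u,·)` as a continuous linear map, the flat-coordinate
expression of the tensor `𝔏(h) = h*Γ − Γ` with the first argument `u` inserted. -/
noncomputable def hessianCocycleCLM (n : ℕ) (h : (Fin n → ℝ) → (Fin n → ℝ))
    (y u : Fin n → ℝ) : (Fin n → ℝ) →L[ℝ] (Fin n → ℝ) :=
  (fderiv ℝ h y).inverse.comp (fderiv ℝ (fderiv ℝ h) y u)

/-- The trace `τ_h(y)(u) = tr(w ↦ L(h)(y)(u,w))`. -/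
noncomputable def hessianTrace (n : ℕ) (h : (Fin n → ℝ) → (Fin n → ℝ))
    (y u : Fin n → ℝ) : ℝ :=
  LinearMap.trace ℝ (Fin n → ℝ) (hessianCocycleCLM n h y u).toLinearMap

/-- The projective symbol
`𝔗(h)(y)(u,v) = L(h)(y)(u,v) − (1/(n+1))(τ_h(y)(u)·v + τ_h(y)(v)·u)`. -/
noncomputable def projSymbol (n : ℕ) (h : (Fin n → ℝ) → (Fin n → ℝ))
    (y u v : Fin n → ℝ) : Fin n → ℝ :=
  hessianCocycleCLM n h y u v
    - (1 / ((n : ℝ) + 1)) •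
        (hessianTrace n h y u • v + hessianTrace n h y v • u)

/-!
The second-order chain rule `D²(f ∘ g)(u, ·) = D²f(Dg u, Dg ·) + Df ∘ D²g(u, ·)`, composed with
`D(f ∘ g)⁻¹ = Dg⁻¹ ∘ Df⁻¹`, makes `L` a cocycle: `L(f ∘ g)(u) = Dg⁻¹ ∘ L(f)(Dg u) ∘ Dg + L(g)(u)`.
The first summand is conjugate to `L(f)(Dg u)`, so `τ` is a cocycle too, and the trace correction
of `𝔗`, being linear in `τ`, transforms like `L`.
-/

section SecondDerivative

variable {𝕜 : Type*} [NontriviallyNormedField 𝕜]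
  {E F G : Type*} [NormedAddCommGroup E] [NormedSpace 𝕜 E] [NormedAddCommGroup F]
  [NormedSpace 𝕜 F] [NormedAddCommGroup G] [NormedSpace 𝕜 G]

theorem fderiv_fderiv_comp_apply {g : E → F} {f : F → G} {x : E}
    (hg : ContDiffAt 𝕜 2 g x) (hf : ContDiffAt 𝕜 2 f (g x)) (u : E) :
    fderiv 𝕜 (fderiv 𝕜 (f ∘ g)) x u
      = (fderiv 𝕜 (fderiv 𝕜 f) (g x) (fderiv 𝕜 g x u)).comp (fderiv 𝕜 g x)
        + (fderiv 𝕜 f (g x)).comp (fderiv 𝕜 (fderiv 𝕜 g) x u) := by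
  have hf_near : ∀ᶠ y in nhds x, ContDiffAt 𝕜 2 f (g y) :=
    hg.continuousAt.eventually (hf.eventually (by simp))
  have hfderiv_comp : fderiv 𝕜 (f ∘ g) =ᶠ[nhds x]
      fun y ↦ (fderiv 𝕜 f (g y)).comp (fderiv 𝕜 g y) := by
    filter_upwards [hf_near, hg.eventually (by simp)] with y hfy hgy
    exact fderiv_comp y (hfy.differentiableAt two_ne_zero) (hgy.differentiableAt two_ne_zero)
  have hDf : DifferentiableAt 𝕜 (fderiv 𝕜 f) (g x) :=
    (hf.fderiv_right one_add_one_eq_two.le).differentiableAt one_ne_zero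
  have hDg : DifferentiableAt 𝕜 (fderiv 𝕜 g) x :=
    (hg.fderiv_right one_add_one_eq_two.le).differentiableAt one_ne_zero
  have hg' : DifferentiableAt 𝕜 g x := hg.differentiableAt two_ne_zero
  have hDf_g : DifferentiableAt 𝕜 (fun y ↦ fderiv 𝕜 f (g y)) x := hDf.comp x hg'
  rw [hfderiv_comp.fderiv_eq, fderiv_clm_comp hDf_g hDg, fderiv_fun_comp x hDf hg']
  ext v
  simp [add_comm]

end SecondDerivative

theorem ContinuousLinearMap.trace_inverse_comp_comp {R M : Type*} [CommRing R]
    [TopologicalSpace M] [AddCommGroup M] [Module R M] {A B : M →L[R] M}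
    (hA : A.IsInvertible) :
    LinearMap.trace R M (A.inverse ∘L B ∘L A).toLinearMap = LinearMap.trace R M B.toLinearMap := by
  obtain ⟨e, rfl⟩ := hA
  rw [inverse_equiv]
  exact LinearMap.trace_conj' B.toLinearMap e.symm.toLinearEquiv

theorem hessianCocycleCLM_comp {n : ℕ} {g f : (Fin n → ℝ) → (Fin n → ℝ)} {x : Fin n → ℝ}
    (hg : ContDiffAt ℝ 2 g x) (hf : ContDiffAt ℝ 2 f (g x))
    (hDg : (fderiv ℝ g x).IsInvertible) (hDf : (fderiv ℝ f (g x)).IsInvertible)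
    (u : Fin n → ℝ) :
    hessianCocycleCLM n (f ∘ g) x u
      = (fderiv ℝ g x).inverse ∘L hessianCocycleCLM n f (g x) (fderiv ℝ g x u) ∘L fderiv ℝ g x
        + hessianCocycleCLM n g x u := by
  rw [hessianCocycleCLM, fderiv_comp x (hf.differentiableAt two_ne_zero)
      (hg.differentiableAt two_ne_zero), hDg.inverse_comp_of_right,
    fderiv_fderiv_comp_apply hg hf]
  ext v
  simp [hessianCocycleCLM, hDf.inverse_apply_self]

theorem hessianTrace_comp {n : ℕ} {g f : (Fin n → ℝ) → (Fin n → ℝ)} {x : Fin n → ℝ}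
    (hg : ContDiffAt ℝ 2 g x) (hf : ContDiffAt ℝ 2 f (g x))
    (hDg : (fderiv ℝ g x).IsInvertible) (hDf : (fderiv ℝ f (g x)).IsInvertible)
    (u : Fin n → ℝ) :
    hessianTrace n (f ∘ g) x u = hessianTrace n f (g x) (fderiv ℝ g x u) + hessianTrace n g x u := by
  rw [hessianTrace, hessianCocycleCLM_comp hg hf hDg hDf, toLinearMap_add, map_add,
    trace_inverse_comp_comp hDg, hessianTrace, hessianTrace]

theorem projSymbol_comp_general (n : ℕ) (U V : Set (Fin n → ℝ))
    (hU : IsOpen U) (hV : IsOpen V)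
    (g f : (Fin n → ℝ) → (Fin n → ℝ))
    (hgUV : Set.MapsTo g U V)
    (hg : ContDiffOn ℝ 2 g U) (hf : ContDiffOn ℝ 2 f V)
    (x : Fin n → ℝ) (hx : x ∈ U)
    (hDg : (fderiv ℝ g x).IsInvertible) (hDf : (fderiv ℝ f (g x)).IsInvertible) :
    ∀ u v : Fin n → ℝ,
      projSymbol n (f ∘ g) x u v
        = (fderiv ℝ g x).inverse
            (projSymbol n f (g x) (fderiv ℝ g x u) (fderiv ℝ g x v))
          + projSymbol n g x u v := by
  intro u v
  have hgx : ContDiffAt ℝ 2 g x := hg.contDiffAt (hU.mem_nhds hx)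
  have hfx : ContDiffAt ℝ 2 f (g x) := hf.contDiffAt (hV.mem_nhds (hgUV hx))
  simp only [projSymbol, hessianCocycleCLM_comp hgx hfx hDg hDf,
    hessianTrace_comp hgx hfx hDg hDf, add_apply, coe_comp, Function.comp_apply, map_sub,
    map_smul, map_add, hDg.inverse_apply_self]
  module

/-- The trace-adjusted (projective) Hessian cocycle satisfies the 1-cocycle identity
`𝔗(f∘g)(x)(u,v) = Dg(x)⁻¹( 𝔗(f)(g(x))(Dg(x)u, Dg(x)v) ) + 𝔗(g)(x)(u,v)`. -/
theorem projSymbol_comp (n : ℕ) (hn : 1 ≤ n) (U V W : Set (Fin n → ℝ))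
    (hU : IsOpen U) (hV : IsOpen V) (hW : IsOpen W)
    (g f : (Fin n → ℝ) → (Fin n → ℝ))
    (hgUV : Set.MapsTo g U V) (hfVW : Set.MapsTo f V W)
    (hg : ContDiffOn ℝ 2 g U) (hf : ContDiffOn ℝ 2 f V)
    (x : Fin n → ℝ) (hx : x ∈ U)
    (hDg : (fderiv ℝ g x).IsInvertible) (hDf : (fderiv ℝ f (g x)).IsInvertible) :
    ∀ u v : Fin n → ℝ,
      projSymbol n (f ∘ g) x u v
        = (fderiv ℝ g x).inverse
            (projSymbol n f (g x) (fderiv ℝ g x u) (fderiv ℝ g x v))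
          + projSymbol n g x u v :=
  projSymbol_comp_general n U V hU hV g f hgUV hg hf x hx hDg hDf
end

section
/- Let n ≥ 1, let A be a real n × n matrix, b, c ∈ ℝⁿ, d ∈ ℝ, and let f(x) = (⟨c,x⟩ + d)⁻¹ · (A x + b). Let x satisfy ⟨c,x⟩ + d ≠ 0 and suppose Df(x) is invertible. Put L(f)(x)(u,v) = Df(x)⁻¹( D²f(x)(u,v) ) and τ(u) = tr( w ↦ L(f)(x)(u,w) ). Then the projective symbol vanishes: L(f)(x)(u,v) − (1/(n+1))·( τ(u)·v + τ(v)·u ) = 0 for all u, v ∈ ℝⁿ. In other words, the projective Schwarzian cocycle 𝔗 vanishes on the projective group PSL(n+1,ℝ). -/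
/-!
Write `s y = σ y + d` for the denominator of `f = s⁻¹ • (M + b)`. Then
`Df(y) w = s(y)⁻¹ • (M w - σ w • f y)`, and differentiating once more expresses the second
derivative through the first: `D²f(x)(u,v) = Df(x)(ψ u • v + ψ v • u)` with `ψ = -s(x)⁻¹ • σ`.
Hence `L(f)(x)(u,v) = ψ u • v + ψ v • u`, whose trace is `τ = (n + 1) • ψ`, and the projective
symbol of such a tensor vanishes identically.
-/

open ContinuousLinearMap Topology

section FracLinear

variable {𝕜 E F : Type*} [NontriviallyNormedField 𝕜] [NormedAddCommGroup E] [NormedSpace 𝕜 E]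
  [NormedAddCommGroup F] [NormedSpace 𝕜 F]

def fracLinear (σ : E →L[𝕜] 𝕜) (d : 𝕜) (M : E →L[𝕜] F) (b : F) (y : E) : F :=
  (σ y + d)⁻¹ • (M y + b)

variable (σ : E →L[𝕜] 𝕜) (d : 𝕜) (M : E →L[𝕜] F) (b : F)

theorem hasFDerivAt_inv_affine {y : E} (hy : σ y + d ≠ 0) :
    HasFDerivAt (fun z => (σ z + d)⁻¹) (-((σ y + d)⁻¹ * (σ y + d)⁻¹) • σ) y := by
  refine ((hasFDerivAt_inv hy).comp y (σ.hasFDerivAt.add_const d)).congr_fderiv ?_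
  ext w
  simp [pow_two, mul_comm]

theorem hasFDerivAt_fracLinear {y : E} (hy : σ y + d ≠ 0) :
    HasFDerivAt (fracLinear σ d M b)
      ((σ y + d)⁻¹ • (M - σ.smulRight (fracLinear σ d M b y))) y := by
  refine ((hasFDerivAt_inv_affine σ d hy).smul (M.hasFDerivAt.add_const b)).congr_fderiv ?_
  ext w
  simp only [fracLinear, add_apply, smul_apply, smulRight_apply, sub_apply, smul_eq_mul, smul_sub,
    smul_smul]
  module

theorem fderiv_fracLinear_eventuallyEq {x : E} (hx : σ x + d ≠ 0) :
    fderiv 𝕜 (fracLinear σ d M b) =ᶠ[𝓝 x]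
      fun y => (σ y + d)⁻¹ • (M - σ.smulRight (fracLinear σ d M b y)) := by
  filter_upwards [((σ.continuous.add continuous_const).continuousAt).eventually_ne hx]
    with y hy using (hasFDerivAt_fracLinear σ d M b hy).fderiv

theorem fderiv_fderiv_fracLinear_apply {x : E} (hx : σ x + d ≠ 0) (u v : E) :
    fderiv 𝕜 (fderiv 𝕜 (fracLinear σ d M b)) x u v =
      fderiv 𝕜 (fracLinear σ d M b) x (-(σ x + d)⁻¹ • (σ u • v + σ v • u)) := by
  have hφ := hasFDerivAt_fracLinear σ d M b hx
  have hDφ : HasFDerivAt (fun y => (σ y + d)⁻¹ • (M - σ.smulRight (fracLinear σ d M b y)))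
      _ x :=
    (hasFDerivAt_inv_affine σ d hx).smul
      (((smulRightL 𝕜 E F σ).hasFDerivAt.comp x hφ).const_sub M)
  rw [(fderiv_fracLinear_eventuallyEq σ d M b hx).fderiv_eq, hDφ.fderiv, hφ.fderiv]
  have hsmulRightL : ∀ z, smulRightL 𝕜 E F σ z = σ.smulRight z := fun _ => rfl
  simp only [add_apply, smul_apply, smulRight_apply, sub_apply, comp_apply, hsmulRightL, neg_apply,
    map_smul, map_add, smul_eq_mul]
  module

end FracLinear

theorem LinearMap.trace_smul_id_add_smulRight {R M : Type*} [CommRing R] [AddCommGroup M]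
    [Module R M] [Module.Free R M] [Module.Finite R M] (φ : M →ₗ[R] R) (u : M) :
    trace R M (φ u • id + φ.smulRight u) = (Module.finrank R M + 1) * φ u := by
  simp only [map_add, map_smul, trace_id, trace_smulRight, smul_eq_mul]
  ring

theorem projSymbol_vanishes_on_fractionalLinear_general (n : ℕ)
    (A : Matrix (Fin n) (Fin n) ℝ) (b c : Fin n → ℝ) (d : ℝ)
    (f : (Fin n → ℝ) → (Fin n → ℝ))
    (hf : ∀ x, f x = (∑ i, c i * x i + d)⁻¹ • (A.mulVec x + b))
    (x : Fin n → ℝ) (hx : ∑ i, c i * x i + d ≠ 0)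
    (hDf : (fderiv ℝ f x).IsInvertible)
    (L : (Fin n → ℝ) → (Fin n → ℝ) →L[ℝ] (Fin n → ℝ))
    (hL : ∀ u, L u = (fderiv ℝ f x).inverse.comp (fderiv ℝ (fderiv ℝ f) x u))
    (τ : (Fin n → ℝ) → ℝ)
    (hτ : ∀ u, τ u = LinearMap.trace ℝ (Fin n → ℝ) (L u).toLinearMap) :
    ∀ u v : Fin n → ℝ,
      L u v - (1 / ((n : ℝ) + 1)) • (τ u • v + τ v • u) = 0 := by
  let σ : (Fin n → ℝ) →L[ℝ] ℝ := LinearMap.toContinuousLinearMap (dotProductBilin ℝ ℝ c)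
  let M : (Fin n → ℝ) →L[ℝ] (Fin n → ℝ) := LinearMap.toContinuousLinearMap A.mulVecLin
  obtain rfl : f = fracLinear σ d M b := funext hf
  let ψ := -(σ x + d)⁻¹ • σ
  have hLψ : ∀ u v, L u v = ψ u • v + ψ v • u := fun u v => by
    rw [hL, comp_apply, fderiv_fderiv_fracLinear_apply σ d M b hx, hDf.inverse_apply_eq.mpr rfl]
    simp only [ψ, smul_apply, smul_eq_mul, smul_add, mul_smul]
  have hτψ : ∀ u, τ u = (n + 1) * ψ u := fun u => by
    have hLu : (L u).toLinearMap = ψ.toLinearMap u • LinearMap.id + ψ.toLinearMap.smulRight u :=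
      LinearMap.ext fun v => by simp [hLψ]
    rw [hτ, hLu, LinearMap.trace_smul_id_add_smulRight, Module.finrank_fin_fun]
    rfl
  intro u v
  have hn : (n : ℝ) + 1 ≠ 0 := by positivity
  rw [hLψ, hτψ, hτψ, mul_smul, mul_smul, ← smul_add, smul_smul, one_div, inv_mul_cancel₀ hn,
    one_smul, sub_self]

/-- The projective Schwarzian cocycle `𝔗` vanishes on the projective group
`PSL(n+1,ℝ)`: for a fractional linear map `f(x) = (Ax+b)/(⟨c,x⟩+d)` with invertible
differential, the projective symbol
`L(f)(x)(u,v) − (1/(n+1))(τ(u)·v + τ(v)·u)` vanishes, where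
`L(f)(x)(u,v) = Df(x)⁻¹(D²f(x)(u,v))` and `τ(u) = tr(w ↦ L(f)(x)(u,w))`. -/
theorem projSymbol_vanishes_on_fractionalLinear (n : ℕ) (hn : 1 ≤ n)
    (A : Matrix (Fin n) (Fin n) ℝ) (b c : Fin n → ℝ) (d : ℝ)
    (f : (Fin n → ℝ) → (Fin n → ℝ))
    (hf : ∀ x, f x = (∑ i, c i * x i + d)⁻¹ • (A.mulVec x + b))
    (x : Fin n → ℝ) (hx : ∑ i, c i * x i + d ≠ 0)
    (hDf : (fderiv ℝ f x).IsInvertible)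
    (L : (Fin n → ℝ) → (Fin n → ℝ) →L[ℝ] (Fin n → ℝ))
    (hL : ∀ u, L u = (fderiv ℝ f x).inverse.comp (fderiv ℝ (fderiv ℝ f) x u))
    (τ : (Fin n → ℝ) → ℝ)
    (hτ : ∀ u, τ u = LinearMap.trace ℝ (Fin n → ℝ) (L u).toLinearMap) :
    ∀ u v : Fin n → ℝ,
      L u v - (1 / ((n : ℝ) + 1)) • (τ u • v + τ v • u) = 0 :=
  projSymbol_vanishes_on_fractionalLinear_general n A b c d f hf x hx hDf L hL τ hτ
end

section
/- Let n ≥ 1 and let f : ℝⁿ \ {0} → ℝⁿ be the inversion f(x) = x/‖x‖² with respect to the Euclidean norm. Then for every x ≠ 0 and all u, v ∈ ℝⁿ: D²f(x)(u,v) = Df(x)( ω(u)·v + ω(v)·u − ⟨u,v⟩·ω♯ ), where ω(w) = −2⟨x,w⟩/‖x‖² and ω♯ = −2x/‖x‖². That is, the tensor 𝔏(f) = f*Γ − Γ of the inversion has the conformal pure-trace form δ^k_i ω_j + δ^k_j ω_i − g_{ij} g^{kt} ω_t, so the conformally invariant Schwarzian cocycle vanishes on inversions. -/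
/-! With `N(y) = ‖y‖⁻²` and `f(y) = N(y) • y`, the product rule gives
`Df(y) v = N(y) • v - 2 ⟪f(y), v⟫ • f(y)`. Differentiating this identity once more only
involves `DN` and `Df` again, and the resulting expression for `D²f(x)(u, v)` is a
combination of `u`, `v`, `x` whose coefficients match those of `Df(x)` applied to
`ω(u) • v + ω(v) • u - ⟪u, v⟫ • ω♯`. -/

open scoped RealInnerProductSpace Topology

section

variable {𝕜 E F G : Type*} [NontriviallyNormedField 𝕜] [NormedAddCommGroup E] [NormedSpace 𝕜 E]
  [NormedAddCommGroup F] [NormedSpace 𝕜 F] [NormedAddCommGroup G] [NormedSpace 𝕜 G]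

theorem fderiv_apply_eq_fderiv_apply_const {c : E → F →L[𝕜] G} {x : E}
    (hc : DifferentiableAt 𝕜 c x) (u : E) (v : F) :
    fderiv 𝕜 c x u v = fderiv 𝕜 (fun y => c y v) x u := by
  simp [fderiv_clm_apply hc (differentiableAt_const v)]

end

section

variable {F : Type*} [NormedAddCommGroup F] [InnerProductSpace ℝ F] {x : F}

noncomputable def unitInversion (y : F) : F := (‖y‖ ^ 2)⁻¹ • y

theorem hasFDerivAt_inv_norm_sq (hx : x ≠ 0) :
    HasFDerivAt (fun y : F => (‖y‖ ^ 2)⁻¹) ((-2 / ‖x‖ ^ 4) • innerSL ℝ x) x := by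
  refine ((hasDerivAt_inv (by positivity)).comp_hasFDerivAt x
    (hasFDerivAt_id x).norm_sq).congr_fderiv ?_
  ext v
  simp only [id_eq, ContinuousLinearMap.comp_id, neg_smul, neg_apply, smul_apply,
    coe_innerSL_apply, nsmul_eq_mul, Nat.cast_ofNat, smul_eq_mul]
  ring

theorem hasFDerivAt_unitInversion (hx : x ≠ 0) :
    HasFDerivAt unitInversion
      ((‖x‖ ^ 2)⁻¹ • ContinuousLinearMap.id ℝ F + ((-2 / ‖x‖ ^ 4) • innerSL ℝ x).smulRight x) x :=
  (hasFDerivAt_inv_norm_sq hx).smul (hasFDerivAt_id x)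

theorem contDiffAt_unitInversion (hx : x ≠ 0) {n : WithTop ℕ∞} :
    ContDiffAt ℝ n unitInversion x :=
  ((contDiffAt_id.norm_sq ℝ).inv (by simpa using hx)).smul contDiffAt_id

theorem fderiv_unitInversion_apply (hx : x ≠ 0) (v : F) :
    fderiv ℝ unitInversion x v
      = (‖x‖ ^ 2)⁻¹ • v - (2 * ⟪unitInversion x, v⟫) • unitInversion x := by
  rw [(hasFDerivAt_unitInversion hx).fderiv]
  simp only [add_apply, smul_apply, ContinuousLinearMap.smulRight_apply,
    ContinuousLinearMap.id_apply, innerSL_apply_apply, unitInversion, inner_smul_left, smul_smul]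
  match_scalars
  · ring
  · simp only [map_inv₀, Real.ringHom_apply, smul_eq_mul]
    field_simp

theorem fderiv_fderiv_unitInversion_apply (hx : x ≠ 0) (u v : F) :
    fderiv ℝ (fderiv ℝ unitInversion) x u v
      = fderiv ℝ unitInversion x
          ((-2 * ⟪x, u⟫ / ‖x‖ ^ 2) • v + (-2 * ⟪x, v⟫ / ‖x‖ ^ 2) • u
            - ⟪u, v⟫ • ((-2 / ‖x‖ ^ 2) • x)) := by
  have hdiff : DifferentiableAt ℝ (fderiv ℝ unitInversion) x :=
    ((contDiffAt_unitInversion hx).fderiv_right (m := 1) le_rfl).differentiableAt one_ne_zero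
  have hDv : (fun y => fderiv ℝ unitInversion y v) =ᶠ[𝓝 x]
      fun y => (‖y‖ ^ 2)⁻¹ • v - (2 * ⟪unitInversion y, v⟫) • unitInversion y := by
    filter_upwards [eventually_ne_nhds hx] with y hy using fderiv_unitInversion_apply hy v
  have hI := hasFDerivAt_unitInversion hx
  have hD2 : HasFDerivAt
      (fun y => (‖y‖ ^ 2)⁻¹ • v - (2 * ⟪unitInversion y, v⟫) • unitInversion y) _ x :=
    ((hasFDerivAt_inv_norm_sq hx).smul_const v).sub
      (((hI.inner ℝ (hasFDerivAt_const v x)).const_mul 2).smul hI)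
  rw [fderiv_apply_eq_fderiv_apply_const hdiff, hDv.fderiv_eq, hD2.fderiv,
    fderiv_unitInversion_apply hx]
  simp only [unitInversion, inner_smul_left, map_inv₀, Real.ringHom_apply, smul_add, smul_smul,
    sub_apply, ContinuousLinearMap.smulRight_apply, smul_apply, coe_innerSL_apply, smul_eq_mul,
    add_apply, ContinuousLinearMap.id_apply, ContinuousLinearMap.comp_apply,
    ContinuousLinearMap.prod_apply, zero_apply, fderivInnerCLM_apply, inner_zero_right,
    real_inner_comm, inner_add_right, inner_smul_right, zero_add, neg_mul, inner_sub_right,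
    inner_self_eq_norm_sq_to_K]
  match_scalars <;> field_simp; ring

end

theorem inversion_hessian_general (n : ℕ)
    (f : EuclideanSpace ℝ (Fin n) → EuclideanSpace ℝ (Fin n))
    (hf : ∀ x, f x = (‖x‖ ^ 2)⁻¹ • x) :
    ∀ (x : EuclideanSpace ℝ (Fin n)), x ≠ 0 →
      ∀ u v : EuclideanSpace ℝ (Fin n),
        fderiv ℝ (fderiv ℝ f) x u v
          = fderiv ℝ f x
              ((-2 * ⟪x, u⟫ / ‖x‖ ^ 2) • v + (-2 * ⟪x, v⟫ / ‖x‖ ^ 2) • u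
                - ⟪u, v⟫ • ((-2 / ‖x‖ ^ 2) • x)) := by
  obtain rfl : f = unitInversion := funext hf
  exact fun x hx u v => fderiv_fderiv_unitInversion_apply hx u v

/-- The tensor `𝔏(f) = f*Γ − Γ` of the inversion `f(x) = x/‖x‖²` has the conformal
pure-trace form: `D²f(x)(u,v) = Df(x)( ω(u)·v + ω(v)·u − ⟨u,v⟩·ω♯ )`, where
`ω(w) = −2⟨x,w⟩/‖x‖²` and `ω♯ = −2x/‖x‖²`; hence the conformally invariant
Schwarzian cocycle vanishes on inversions. -/
theorem inversion_hessian (n : ℕ) (hn : 1 ≤ n)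
    (f : EuclideanSpace ℝ (Fin n) → EuclideanSpace ℝ (Fin n))
    (hf : ∀ x, f x = (‖x‖ ^ 2)⁻¹ • x) :
    ∀ (x : EuclideanSpace ℝ (Fin n)), x ≠ 0 →
      ∀ u v : EuclideanSpace ℝ (Fin n),
        fderiv ℝ (fderiv ℝ f) x u v
          = fderiv ℝ f x
              ((-2 * ⟪x, u⟫ / ‖x‖ ^ 2) • v + (-2 * ⟪x, v⟫ / ‖x‖ ^ 2) • u
                - ⟪u, v⟫ • ((-2 / ‖x‖ ^ 2) • x)) :=
  inversion_hessian_general n f hf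
end

section
/- Let Ω ⊆ ℝⁿ be open and let f : Ω → ℝⁿ be a C³ map with Df(x) invertible for every x ∈ Ω. Define M(x)(u,v) = Df(x)⁻¹( D²f(x)(u,v) ) and τ(x)(v) = tr( u ↦ M(x)(u,v) ). Then for every x ∈ Ω and all u, v ∈ ℝⁿ: tr( w ↦ (D_x M(w))(u,v) ) = (D_x τ(·)(v))(u) + tr( A_u ∘ A_v ) − τ(x)( M(x)(u,v) ), where A_u : ℝⁿ → ℝⁿ is A_u(w) = M(x)(w,u), D_x M(w) denotes the derivative at x in direction w of the map x ↦ M(x), and D_x τ(·)(v) the derivative at x of x ↦ τ(x)(v). In coordinates this reads ∂_i 𝔏(f)^i_{jk} = ∂_j 𝔏(f)_k + 𝔏(f)^m_{sj} 𝔏(f)^s_{km} − 𝔏(f)_m 𝔏(f)^m_{jk}, i.e. the transformation law f⁻¹*R − R of the Ricci tensor under pullback, specialized to the flat connection where both Ricci tensors vanish. -/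
/-!
Differentiating `M = Df⁻¹ ∘ D²f` with the rule `D(A⁻¹) = -A⁻¹ (DA) A⁻¹` gives
`DM(w)(a, b) = Df⁻¹ D³f(w, a, b) - M(w, M(a, b))`. Since `D³f` is symmetric in its first two
slots and `M` is symmetric, exchanging `w` and `u` yields
`DM(w)(u, v) = DM(u)(w, v) + M(M(w, v), u) - M(w, M(u, v))`.
Taking the trace in `w` gives the identity, because the trace of `w ↦ DM(u)(w, v)` is the
derivative of `τ(·)(v)` in the direction `u`.
-/

open ContinuousLinearMap

theorem HasFDerivAt.clm_inverse {𝕜 X E : Type*} [NontriviallyNormedField 𝕜]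
    [NormedAddCommGroup X] [NormedSpace 𝕜 X] [NormedAddCommGroup E] [NormedSpace 𝕜 E]
    [CompleteSpace E] {A : X → E →L[𝕜] E} {A' : X →L[𝕜] E →L[𝕜] E} {x : X}
    (hA : HasFDerivAt A A' x) (hx : (A x).IsInvertible) :
    HasFDerivAt (fun y => (A y).inverse)
      (-mulLeftRight 𝕜 (E →L[𝕜] E) (A x).inverse (A x).inverse ∘L A') x := by
  obtain ⟨e, he⟩ := hx
  have h : HasFDerivAt Ring.inverse
      (-mulLeftRight 𝕜 (E →L[𝕜] E) (A x).inverse (A x).inverse) (A x) := by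
    rw [← he, inverse_equiv]
    exact hasFDerivAt_ringInverse e.toUnit
  rw [ringInverse_eq_inverse] at h
  exact h.comp x hA

theorem fderiv_trace_apply_comp {𝕜 X E : Type*} [NontriviallyNormedField 𝕜] [CompleteSpace 𝕜]
    [NormedAddCommGroup X] [NormedSpace 𝕜 X] [NormedAddCommGroup E] [NormedSpace 𝕜 E]
    [FiniteDimensional 𝕜 E] {N : X → E →L[𝕜] E →L[𝕜] E} {x : X} (hN : DifferentiableAt 𝕜 N x)
    (u : X) (v : E) :
    fderiv 𝕜 (fun y => LinearMap.trace 𝕜 E ((apply 𝕜 E v ∘L N y) : E →ₗ[𝕜] E)) x u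
      = LinearMap.trace 𝕜 E ((apply 𝕜 E v ∘L fderiv 𝕜 N x u) : E →ₗ[𝕜] E) := by
  let T : (E →L[𝕜] E →L[𝕜] E) →L[𝕜] 𝕜 := LinearMap.toContinuousLinearMap
    (LinearMap.trace 𝕜 E ∘ₗ (coeLM 𝕜 : (E →L[𝕜] E) →ₗ[𝕜] E →ₗ[𝕜] E) ∘ₗ
      (compL 𝕜 E (E →L[𝕜] E) E (apply 𝕜 E v)).toLinearMap)
  have h : HasFDerivAt (fun y => T (N y)) (T ∘L fderiv 𝕜 N x) x :=
    T.hasFDerivAt.comp x hN.hasFDerivAt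
  change fderiv 𝕜 (fun y => T (N y)) x u = T (fderiv 𝕜 N x u)
  rw [h.fderiv]
  rfl

section

variable {𝕜 E : Type*} [NontriviallyNormedField 𝕜] [NormedAddCommGroup E] [NormedSpace 𝕜 E]

variable (𝕜) in
/-- The tensor `𝔏(f) = f*Γ - Γ` of the flat connection, in flat coordinates. Where `Df` is not
invertible, `ContinuousLinearMap.inverse` makes it `0`. -/
noncomputable def pullbackChristoffel (f : E → E) (y : E) : E →L[𝕜] E →L[𝕜] E :=
  (compL 𝕜 E E E (fderiv 𝕜 f y).inverse).comp (fderiv 𝕜 (fderiv 𝕜 f) y)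

variable [CompleteSpace E] {f : E → E} {x : E}

theorem hasFDerivAt_pullbackChristoffel (hf : ContDiffAt 𝕜 3 f x)
    (hx : (fderiv 𝕜 f x).IsInvertible) :
    HasFDerivAt (pullbackChristoffel 𝕜 f)
      ((compL 𝕜 E (E →L[𝕜] E) (E →L[𝕜] E) (compL 𝕜 E E E (fderiv 𝕜 f x).inverse)).comp
          (fderiv 𝕜 (fderiv 𝕜 (fderiv 𝕜 f)) x)
        + ((compL 𝕜 E (E →L[𝕜] E) (E →L[𝕜] E)).flip (fderiv 𝕜 (fderiv 𝕜 f) x)).comp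
          ((compL 𝕜 E E E).comp
            (-mulLeftRight 𝕜 (E →L[𝕜] E) (fderiv 𝕜 f x).inverse (fderiv 𝕜 f x).inverse ∘L
              fderiv 𝕜 (fderiv 𝕜 f) x))) x := by
  have hDf : ContDiffAt 𝕜 2 (fderiv 𝕜 f) x := hf.fderiv_right (by norm_num)
  have hD2f : ContDiffAt 𝕜 1 (fderiv 𝕜 (fderiv 𝕜 f)) x := hDf.fderiv_right (by norm_num)
  have hinv := (hDf.differentiableAt (by norm_num)).hasFDerivAt.clm_inverse hx
  exact ((compL 𝕜 E E E).hasFDerivAt.comp x hinv).clm_comp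
    (hD2f.differentiableAt (by norm_num)).hasFDerivAt

theorem fderiv_pullbackChristoffel_apply (hf : ContDiffAt 𝕜 3 f x)
    (hx : (fderiv 𝕜 f x).IsInvertible) (w a b : E) :
    fderiv 𝕜 (pullbackChristoffel 𝕜 f) x w a b
      = (fderiv 𝕜 f x).inverse (fderiv 𝕜 (fderiv 𝕜 (fderiv 𝕜 f)) x w a b)
        - pullbackChristoffel 𝕜 f x w (pullbackChristoffel 𝕜 f x a b) := by
  rw [(hasFDerivAt_pullbackChristoffel hf hx).fderiv]
  simp [pullbackChristoffel, sub_eq_add_neg]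

end

section

variable {𝕜 E : Type*} [RCLike 𝕜] [NormedAddCommGroup E] [NormedSpace 𝕜 E] {f : E → E} {x : E}

theorem pullbackChristoffel_apply_comm (hf : ContDiffAt 𝕜 2 f x) (a b : E) :
    pullbackChristoffel 𝕜 f x a b = pullbackChristoffel 𝕜 f x b a := by
  simp only [pullbackChristoffel, coe_comp, Function.comp_apply, compL_apply]
  rw [hf.isSymmSndFDerivAt (by simp) a b]

theorem fderiv_pullbackChristoffel_apply_swap [CompleteSpace E] (hf : ContDiffAt 𝕜 3 f x)
    (hx : (fderiv 𝕜 f x).IsInvertible) (w u v : E) :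
    fderiv 𝕜 (pullbackChristoffel 𝕜 f) x w u v
      = fderiv 𝕜 (pullbackChristoffel 𝕜 f) x u w v
        + pullbackChristoffel 𝕜 f x (pullbackChristoffel 𝕜 f x w v) u
        - pullbackChristoffel 𝕜 f x w (pullbackChristoffel 𝕜 f x u v) := by
  have hDf : ContDiffAt 𝕜 2 (fderiv 𝕜 f) x := hf.fderiv_right (by norm_num)
  rw [fderiv_pullbackChristoffel_apply hf hx, fderiv_pullbackChristoffel_apply hf hx,
    hDf.isSymmSndFDerivAt (by simp) u w,
    pullbackChristoffel_apply_comm (hf.of_le (by norm_num)) _ u]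
  abel

end

/-- The flat-connection form of the Ricci transformation law
`∂_i 𝔏(f)^i_{jk} = ∂_j 𝔏(f)_k + 𝔏(f)^m_{sj} 𝔏(f)^s_{km} − 𝔏(f)_m 𝔏(f)^m_{jk}`:
for the tensor `M(x)(u,v) = Df(x)⁻¹(D²f(x)(u,v))` and its trace
`τ(x)(v) = tr(u ↦ M(x)(u,v))`, one has
`tr(w ↦ (D_x M(w))(u,v)) = (D_x τ(·)(v))(u) + tr(A_u ∘ A_v) − τ(x)(M(x)(u,v))`,
where `A_u(w) = M(x)(w,u)`. -/
theorem ricci_transformation_flat (n : ℕ) (Ω : Set (Fin n → ℝ)) (hΩ : IsOpen Ω)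
    (f : (Fin n → ℝ) → (Fin n → ℝ)) (hf : ContDiffOn ℝ 3 f Ω)
    (hinv : ∀ x ∈ Ω, (fderiv ℝ f x).IsInvertible)
    (M : (Fin n → ℝ) → ((Fin n → ℝ) →L[ℝ] (Fin n → ℝ) →L[ℝ] (Fin n → ℝ)))
    (hM : ∀ y, M y = ((ContinuousLinearMap.compL ℝ (Fin n → ℝ) (Fin n → ℝ) (Fin n → ℝ))
      ((fderiv ℝ f y).inverse)).comp (fderiv ℝ (fderiv ℝ f) y))
    (τ : (Fin n → ℝ) → (Fin n → ℝ) → ℝ)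
    (hτ : ∀ y v, τ y v = LinearMap.trace ℝ (Fin n → ℝ)
      (((ContinuousLinearMap.apply ℝ (Fin n → ℝ) v).comp (M y)).toLinearMap)) :
    ∀ x ∈ Ω, ∀ u v : Fin n → ℝ,
      LinearMap.trace ℝ (Fin n → ℝ)
          (((ContinuousLinearMap.apply ℝ (Fin n → ℝ) v).comp
            (((ContinuousLinearMap.apply ℝ ((Fin n → ℝ) →L[ℝ] (Fin n → ℝ)) u).comp
              (fderiv ℝ M x)))).toLinearMap)
        = fderiv ℝ (fun y => τ y v) x u
          + LinearMap.trace ℝ (Fin n → ℝ)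
              ((((ContinuousLinearMap.apply ℝ (Fin n → ℝ) u).comp (M x)).comp
                ((ContinuousLinearMap.apply ℝ (Fin n → ℝ) v).comp (M x))).toLinearMap)
          - τ x (M x u v) := by
  intro x hx u v
  obtain rfl : M = pullbackChristoffel ℝ f := funext hM
  obtain rfl : τ = fun y v => LinearMap.trace ℝ (Fin n → ℝ)
      ((apply ℝ (Fin n → ℝ) v ∘L pullbackChristoffel ℝ f y) : _ →ₗ[ℝ] _) := funext₂ hτ
  have hfx : ContDiffAt ℝ 3 f x := hf.contDiffAt (hΩ.mem_nhds hx)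
  rw [fderiv_trace_apply_comp (hasFDerivAt_pullbackChristoffel hfx (hinv x hx)).differentiableAt,
    ← map_add, ← map_sub]
  congr 1
  refine LinearMap.ext fun w => ?_
  simp only [LinearMap.sub_apply, LinearMap.add_apply, coe_coe, coe_comp, Function.comp_apply,
    apply_apply]
  exact fderiv_pullbackChristoffel_apply_swap hfx (hinv x hx) w u v
end
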